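/- The function v(z) = (K/4)·((−2z⁵ + z⁴ − z³ + 2z² − z + 1)/(z² + 1)² + arctan(z) − π/4) with K = 3.3957 is strictly decreasing on the interval (z₀, 1), where z₀ = √(√5 − 2). -/

import Mathlib

noncomputable def v (z : ℝ) : ℝ :=
  (3.3957 / 4) * ((-2*z^5 + z^4 - z^3 + 2*z^2 - z + 1) / (z^2 + 1)^2 + Real.arctan z - Real.pi / 4)

lemma v_hasDerivAt (z : ℝ) :
    HasDerivAt v (-3.3957 * z^2 * (z^4 + 4*z^2 - 1) / (2 * (z^2 + 1)^3)) z := by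
  have hz : (z^2 + 1 : ℝ) ≠ 0 := by positivity
  have hz2 : ((z^2 + 1 : ℝ)^2) ≠ 0 := pow_ne_zero _ hz
  have hid := hasDerivAt_id z
  have hN : HasDerivAt (fun z : ℝ => -2*z^5 + z^4 - z^3 + 2*z^2 - z + 1)
      (-10*z^4 + 4*z^3 - 3*z^2 + 4*z - 1) z := by
    have h5 := (hid.pow 5).const_mul (-2 : ℝ)
    have h4 := hid.pow 4
    have h3 := hid.pow 3
    have h2 := (hid.pow 2).const_mul (2 : ℝ)
    have h := ((((h5.add h4).sub h3).add h2).sub hid).add_const 1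
    convert h using 1
    · rfl
    · rfl
    · rfl
    simp
    ring
  have hD : HasDerivAt (fun z : ℝ => (z^2 + 1)^2)
      (4*z*(z^2 + 1)) z := by
    have h := ((hid.pow 2).add_const 1).pow 2
    convert h using 1
    · rfl
    · rfl
    · rfl
    simp
    ring
  have hQ := hN.div hD hz2
  have hA := Real.hasDerivAt_arctan z
  have hv := ((hQ.add hA).sub_const (Real.pi / 4)).const_mul (3.3957 / 4 : ℝ)
  convert hv using 1
  · rfl
  · rfl
  · rfl
  have h1 : (1 + z^2 : ℝ) ≠ 0 := by positivity
  field_simp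
  ring

lemma v_deriv_neg {z : ℝ} (hz : z ∈ Set.Ioo (Real.sqrt (Real.sqrt 5 - 2)) 1) :
    deriv v z < 0 := by
  obtain ⟨h1, _⟩ := hz
  rw [(v_hasDerivAt z).deriv]
  have h5 : (2:ℝ) ≤ Real.sqrt 5 := by
    nlinarith [Real.sq_sqrt (by norm_num : (5:ℝ) ≥ 0), Real.sqrt_nonneg 5]
  have h0 : (0:ℝ) ≤ Real.sqrt (Real.sqrt 5 - 2) := Real.sqrt_nonneg _
  have hzpos : 0 < z := lt_of_le_of_lt h0 h1
  have hsq : Real.sqrt (Real.sqrt 5 - 2) ^ 2 = Real.sqrt 5 - 2 :=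
    Real.sq_sqrt (by linarith)
  have hz2 : Real.sqrt 5 - 2 < z^2 := by
    have := mul_self_lt_mul_self h0 h1
    nlinarith [hsq]
  have h5sq : Real.sqrt 5 ^ 2 = 5 := Real.sq_sqrt (by norm_num)
  have hpos : 0 < z^4 + 4*z^2 - 1 := by nlinarith
  apply div_neg_of_neg_of_pos
  · nlinarith [sq_nonneg z]
  · positivity

theorem v_strictAntiOn :
    StrictAntiOn v (Set.Ioo (Real.sqrt (Real.sqrt 5 - 2)) 1) := by
  apply strictAntiOn_of_deriv_neg (convex_Ioo _ _)
  · exact fun z _ => ((v_hasDerivAt z).differentiableAt).continuousAt.continuousWithinAt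
  · intro z hz
    rw [interior_Ioo] at hz
    exact v_deriv_neg hz
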